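/- arXiv:2210.09751 — 2 statements merged into one kernel-verified Lean document; each statement's English description precedes it below -/
import Mathlib

section
/- Let f : [0,1] → [0,1] be a homeomorphism whose set of non-wandering points is finite. Then for every integer k ≥ 1, the polynomial entropy of the induced map f^{*k} on the k-fold symmetric product [0,1]^{*k} equals k. -/
/-!
A homeomorphism `f` of `[0,1]` is monotone, so an `(n, ε)`-separated subset of `[0,1]` has
`O(n / ε)` points, and a maximal `(n, ε/3)`-separated set `D` is `(n, ε/3)`-spanning. Moving each
point of a configuration to a point of `D` that shadows it is injective on `(n, ε)`-separated
subsets of `[0,1]^{*k}`, which therefore have at most `(k+1)(#D+1)^k = O(n^k)` elements.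

Conversely, `f ∘ f` is an increasing homeomorphism which is not the identity (otherwise every point
would be non-wandering), so some orbit `z j = (f ∘ f)^j c`, `j ∈ ℤ`, is strictly monotone and `z 0`
is at distance at least `ε₀ > 0` from all other `z i`. The configurations `{z (-s) : s ∈ T}`, for
`T` a `k`-subset of `{0, …, n/2 - 1}`, are `(n, ε₀)`-separated, which gives `choose (n/2) k ≍ n^k`
points.
-/

open Filter Topology TopologicalSpace Set
open scoped ENNReal

/-- The dynamic distance `d_n^f(x,y) = max_{0 ≤ k ≤ n-1} d(f^k x, f^k y)`. -/
noncomputable def dynDist {X : Type*} [MetricSpace X] (f : X → X) (n : ℕ) (x y : X) : ℝ :=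
  ((Finset.range n).sup fun k => nndist (f^[k] x) (f^[k] y) : NNReal)

/-- A finite set `E` is `(n,ε)`-separated for `f`. -/
def IsDynSeparated {X : Type*} [MetricSpace X] (f : X → X) (n : ℕ) (ε : ℝ) (E : Finset X) :
    Prop :=
  ∀ x ∈ E, ∀ y ∈ E, x ≠ y → ε ≤ dynDist f n x y

/-- `S(n,ε;Y)`: the maximal cardinality of an `(n,ε)`-separated subset of `Y`. -/
noncomputable def maxSep {X : Type*} [MetricSpace X] (f : X → X) (Y : Set X) (n : ℕ) (ε : ℝ) :
    ℕ :=
  sSup {m : ℕ | ∃ E : Finset X, ↑E ⊆ Y ∧ E.card = m ∧ IsDynSeparated f n ε E}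

/-- The polynomial entropy `h_pol(f;Y)`.  Since `ε ↦ S(n,ε;Y)` is nonincreasing, the limit as
`ε → 0` of the `limsup` coincides with the supremum over `ε > 0`. -/
noncomputable def polEnt {X : Type*} [MetricSpace X] (f : X → X) (Y : Set X) : ℝ≥0∞ :=
  ⨆ (ε : ℝ) (_ : 0 < ε),
    Filter.atTop.limsup fun n : ℕ =>
      ENNReal.ofReal (Real.log (maxSep f Y n ε) / Real.log n)

/-- The set of non-wandering points of `f`. -/
def nonWandering {X : Type*} [TopologicalSpace X] (f : X → X) : Set X :=
  {p | ∀ U ∈ nhds p, ∃ n : ℕ, 1 ≤ n ∧ (f^[n] '' U ∩ U).Nonempty}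

/-- The induced map `2^f` on the hyperspace of nonempty closed (= compact) subsets of a
compact metric space. -/
noncomputable def induced2 {X : Type*} [TopologicalSpace X] (f : X → X) (hf : Continuous f) :
    NonemptyCompacts X → NonemptyCompacts X :=
  fun A => ⟨⟨f '' A, A.isCompact.image hf⟩, A.nonempty.image f⟩

/-- The hyperspace `C(X)` of subcontinua (nonempty closed connected subsets) of `X`. -/
abbrev Subcontinua (X : Type*) [TopologicalSpace X] :=
  {A : NonemptyCompacts X // IsConnected (A : Set X)}

/-- The induced map `C(f)` on the hyperspace of subcontinua. -/
noncomputable def inducedC {X : Type*} [TopologicalSpace X] (f : X → X) (hf : Continuous f) :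
    Subcontinua X → Subcontinua X :=
  fun A => ⟨induced2 f hf A.1, A.2.image f hf.continuousOn⟩

/-- The `k`-fold symmetric product `X^{*k}`: nonempty subsets of `X` with at most `k` points. -/
abbrev SymProd (X : Type*) [TopologicalSpace X] (k : ℕ) :=
  {A : NonemptyCompacts X // (A : Set X).Finite ∧ (A : Set X).ncard ≤ k}

/-- The induced map `f^{*k}` on the `k`-fold symmetric product. -/
noncomputable def inducedSym {X : Type*} [TopologicalSpace X] (f : X → X) (hf : Continuous f)
    (k : ℕ) : SymProd X k → SymProd X k :=
  fun A => ⟨induced2 f hf A.1, A.2.1.image f, le_trans (Set.ncard_image_le A.2.1) A.2.2⟩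

/-- Sets `U 0, …, U (L-1)` are mutually singular for `f`. -/
def MutuallySingularSets {X : Type*} [TopologicalSpace X] (f : X → X) {L : ℕ}
    (U : Fin L → Set X) : Prop :=
  ∀ M : ℕ, ∃ x : X, ∃ n : Fin L → ℕ, (∀ j, 1 ≤ n j ∧ f^[n j] x ∈ U j) ∧
    ∀ i j, i ≠ j → (M : ℤ) < |(n i : ℤ) - (n j : ℤ)|

/-- A finite set `S ⊆ X \ NW(f)` is singular: it consists of mutually singular points, i.e.
every family of respective neighbourhoods of its points is mutually singular. -/
def IsSingularSet {X : Type*} [TopologicalSpace X] (f : X → X) (S : Set X) : Prop :=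
  S.Finite ∧ (∀ x ∈ S, x ∉ nonWandering f) ∧
  ∀ (L : ℕ) (x : Fin L → X), Function.Injective x → Set.range x = S →
    ∀ U : Fin L → Set X, (∀ j, U j ∈ nhds (x j)) → MutuallySingularSets f U

/-- The set of codings of length-`n` orbit segments of points of `Y` relative to the family
`F`, where the letter `none` stands for `Y_∞ = Y \ ⋃ F`. -/
def codings {X : Type*} (f : X → X) {L : ℕ} (F : Fin L → Set X) (Y : Set X) (n : ℕ) :
    Set (Fin n → Option (Fin L)) :=
  {w | ∃ x ∈ Y, ∀ j : Fin n, match w j with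
    | some i => f^[(j : ℕ)] x ∈ F i
    | none => f^[(j : ℕ)] x ∈ Y \ ⋃ i, F i}

/-- The polynomial entropy of `f` on `Y` relative to the family `F`:
`limsup_n log #A_n(F;Y) / log n`. -/
noncomputable def polEntRel {X : Type*} (f : X → X) {L : ℕ} (F : Fin L → Set X) (Y : Set X) :
    ℝ≥0∞ :=
  Filter.atTop.limsup fun n : ℕ =>
    ENNReal.ofReal (Real.log ((codings f F Y n).ncard) / Real.log n)

/-- The circle is connected. -/
theorem circle_isConnected_univ : IsConnected (Set.univ : Set Circle) := by
  have hsurj : Function.Surjective Circle.exp := fun z => ⟨Complex.arg z, Circle.exp_arg z⟩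
  have : ConnectedSpace Circle :=
    { toPreconnectedSpace := ⟨by
        rw [← Set.image_univ_of_surjective hsurj]
        exact isPreconnected_univ.image _ Circle.exp.continuous.continuousOn⟩,
      toNonempty := ⟨1⟩ }
  exact isConnected_univ

section DynDist

variable {X : Type*} [MetricSpace X] (f : X → X) (n : ℕ)

theorem dynDist_self (x : X) : dynDist f n x x = 0 := by
  simp [dynDist]

theorem dynDist_comm (x y : X) : dynDist f n x y = dynDist f n y x := by
  simp only [dynDist, nndist_comm]

variable {f n} {x y : X}

theorem dynDist_le_iff {δ : ℝ} (hδ : 0 ≤ δ) :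
    dynDist f n x y ≤ δ ↔ ∀ t < n, dist (f^[t] x) (f^[t] y) ≤ δ := by
  lift δ to NNReal using hδ
  rw [dynDist, NNReal.coe_le_coe, Finset.sup_le_iff]
  simp only [Finset.mem_range, ← NNReal.coe_le_coe, coe_nndist]

theorem le_dynDist_iff {ε : ℝ} (hε : 0 < ε) :
    ε ≤ dynDist f n x y ↔ ∃ t < n, ε ≤ dist (f^[t] x) (f^[t] y) := by
  lift ε to NNReal using hε.le
  rw [dynDist, NNReal.coe_le_coe, Finset.le_sup_iff (NNReal.coe_pos.mp hε)]
  simp only [Finset.mem_range, ← NNReal.coe_le_coe, coe_nndist]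

end DynDist

section MaxSep

variable {X : Type*} [MetricSpace X] {f : X → X} {Y : Set X} {n : ℕ} {ε : ℝ} {B : ℕ}

theorem maxSep_le (hB : ∀ E : Finset X, ↑E ⊆ Y → IsDynSeparated f n ε E → E.card ≤ B) :
    maxSep f Y n ε ≤ B :=
  csSup_le ⟨0, ∅, by simp, rfl, by simp [IsDynSeparated]⟩ fun _ ⟨E, hEY, hE, hsep⟩ =>
    hE ▸ hB E hEY hsep

theorem card_le_maxSep (hB : ∀ E : Finset X, ↑E ⊆ Y → IsDynSeparated f n ε E → E.card ≤ B)
    {E : Finset X} (hEY : ↑E ⊆ Y) (hE : IsDynSeparated f n ε E) : E.card ≤ maxSep f Y n ε :=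
  le_csSup ⟨B, fun _ ⟨E, hEY, hE, hsep⟩ => hE ▸ hB E hEY hsep⟩ ⟨E, hEY, rfl, hE⟩

theorem exists_finset_forall_exists_dynDist_lt (hε : 0 < ε)
    (hB : ∀ E : Finset X, IsDynSeparated f n ε E → E.card ≤ B) :
    ∃ D : Finset X, D.card ≤ B ∧ ∀ x, ∃ y ∈ D, dynDist f n x y < ε := by
  classical
  set S := {m | ∃ E : Finset X, IsDynSeparated f n ε E ∧ E.card = m}
  have hbdd : BddAbove S := ⟨B, fun _ ⟨E, hE, hcard⟩ => hcard ▸ hB E hE⟩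
  obtain ⟨D, hD, hDcard⟩ : sSup S ∈ S := Nat.sSup_mem ⟨0, ∅, by simp [IsDynSeparated], rfl⟩ hbdd
  refine ⟨D, hB D hD, fun x => ?_⟩
  by_contra! hfar
  have hxD : x ∉ D := fun hx => (hfar x hx).not_gt (by rwa [dynDist_self])
  have hsep : IsDynSeparated f n ε (insert x D) := by
    simp only [IsDynSeparated, Finset.mem_insert]
    rintro a (rfl | ha) b (rfl | hb) hab
    exacts [absurd rfl hab, hfar b hb, dynDist_comm f n a b ▸ hfar a ha, hD a ha b hb hab]
  have : (insert x D).card ≤ sSup S := le_csSup hbdd ⟨_, hsep, rfl⟩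
  rw [Finset.card_insert_of_notMem hxD, hDcard] at this
  omega

end MaxSep

section UnitInterval

theorem monotone_or_antitone_iterate {α : Type*} [Preorder α] {f : α → α}
    (hf : Monotone f ∨ Antitone f) (t : ℕ) : Monotone f^[t] ∨ Antitone f^[t] := by
  induction t with
  | zero => exact Or.inl monotone_id
  | succ t ih =>
    rw [Function.iterate_succ']
    rcases hf with hf | hf <;> rcases ih with ih | ih
    exacts [Or.inl (hf.comp ih), Or.inr (hf.comp_antitone ih), Or.inr (hf.comp_monotone ih),
      Or.inl (hf.comp ih)]

theorem mem_uIcc_of_le_of_le {α : Type*} [Preorder α] {g : α → unitInterval}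
    (hg : Monotone g ∨ Antitone g) {x y z : α} (hxy : x ≤ y) (hyz : y ≤ z) :
    (g y : ℝ) ∈ Set.uIcc (g x : ℝ) (g z) := by
  rcases hg with hg | hg
  exacts [Set.Icc_subset_uIcc ⟨hg hxy, hg hyz⟩, Set.Icc_subset_uIcc' ⟨hg hyz, hg hxy⟩]

theorem dist_lt_of_floor_div_eq {a b ε : ℝ} (ha : 0 ≤ a) (hb : 0 ≤ b) (hε : 0 < ε)
    (h : ⌊a / ε⌋₊ = ⌊b / ε⌋₊) : dist a b < ε := by
  have := Int.abs_sub_lt_one_of_floor_eq_floor (R := ℝ) (a := a / ε) (b := b / ε) <| by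
    rw [← Int.natCast_floor_eq_floor (by positivity), ← Int.natCast_floor_eq_floor (by positivity),
      h]
  rwa [← sub_div, abs_div, abs_of_pos hε, div_lt_one hε, ← Real.dist_eq] at this

variable {f : unitInterval → unitInterval} {n : ℕ} {ε : ℝ} {E : Finset unitInterval}

/-- Separate `x` from its successor in `E`; by monotonicity of the iterates, the same time
separates it from every larger point. -/
theorem exists_lt_forall_lt_le_dist (hf : ∀ t, Monotone f^[t] ∨ Antitone f^[t]) (hε : 0 < ε)
    (hE : IsDynSeparated f n ε E) {x : unitInterval} (hx : x ∈ E) (hlt : ∃ y ∈ E, x < y) :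
    ∃ t < n, ∀ y ∈ E, x < y → ε ≤ dist (f^[t] x) (f^[t] y) := by
  classical
  have hne : (E.filter (x < ·)).Nonempty := by simpa [Finset.filter_nonempty_iff] using hlt
  obtain ⟨hy₀E, hxy₀⟩ := Finset.mem_filter.mp ((E.filter (x < ·)).min'_mem hne)
  obtain ⟨t, ht, hsep⟩ := (le_dynDist_iff hε).mp (hE x hx _ hy₀E hxy₀.ne)
  refine ⟨t, ht, fun y hy hxy => hsep.trans ?_⟩
  rw [Subtype.dist_eq, Subtype.dist_eq]
  exact Real.dist_left_le_of_mem_uIcc <| mem_uIcc_of_le_of_le (hf t) hxy₀.le <|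
    Finset.min'_le _ _ (Finset.mem_filter.mpr ⟨hy, hxy⟩)

/-- Label each point but the largest by a time at which it is separated from all larger points,
and by the `ε`-cell containing its image at that time: the labelling is injective. -/
theorem card_le_of_isDynSeparated_unitInterval (hf : ∀ t, Monotone f^[t] ∨ Antitone f^[t])
    (hε : 0 < ε) (hE : IsDynSeparated f n ε E) : E.card ≤ n * (⌊1 / ε⌋₊ + 1) + 1 := by
  rcases E.eq_empty_or_nonempty with rfl | hne
  · simp
  set E' := E.erase (E.max' hne)
  have htime : ∀ x ∈ E', ∃ t < n, ∀ y ∈ E, x < y → ε ≤ dist (f^[t] x) (f^[t] y) :=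
    fun x hx => exists_lt_forall_lt_le_dist hf hε hE (Finset.mem_of_mem_erase hx)
      ⟨_, E.max'_mem hne, (E.le_max' x (Finset.mem_of_mem_erase hx)).lt_of_ne
        (Finset.ne_of_mem_erase hx)⟩
  choose! T hT hTsep using htime
  set label : unitInterval → ℕ × ℕ := fun x => (T x, ⌊(f^[T x] x : ℝ) / ε⌋₊)
  have hmaps : Set.MapsTo label E' (Finset.range n ×ˢ Finset.range (⌊1 / ε⌋₊ + 1) :) := by
    intro x hx
    simp only [label, Finset.coe_product, Finset.coe_range, Set.mem_prod, Set.mem_Iio]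
    exact ⟨hT x hx, Nat.lt_succ_of_le <| Nat.floor_mono <|
      div_le_div_of_nonneg_right (f^[T x] x).2.2 hε.le⟩
  have hlabel : ∀ x ∈ E', ∀ y ∈ E', x < y → label x ≠ label y := by
    intro x hx y hy hxy hlabel
    obtain ⟨hTxy, hcell⟩ := Prod.mk.inj hlabel
    rw [← hTxy] at hcell
    refine (hTsep x hx y (Finset.mem_of_mem_erase hy) hxy).not_gt ?_
    rw [Subtype.dist_eq]
    exact dist_lt_of_floor_div_eq (f^[T x] x).2.1 (f^[T x] y).2.1 hε hcell
  have hinj : Set.InjOn label E' := by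
    intro x hx y hy hxy
    by_contra hne
    rcases lt_or_gt_of_ne hne with h | h
    exacts [hlabel x hx y hy h hxy, hlabel y hy x hx h hxy.symm]
  have := Finset.card_le_card_of_injOn label hmaps hinj
  rw [Finset.card_product, Finset.card_range, Finset.card_range,
    Finset.card_erase_of_mem (E.max'_mem hne)] at this
  omega

end UnitInterval

section SymProd

variable {X : Type*} [MetricSpace X] {k : ℕ}

theorem SymProd.dist_eq (A B : SymProd X k) :
    dist A B = Metric.hausdorffDist (A.1 : Set X) (B.1 : Set X) :=
  rfl

theorem inducedSym_iterate_coe (f : X → X) (hf : Continuous f) (t : ℕ) (A : SymProd X k) :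
    (((inducedSym f hf k)^[t] A).1 : Set X) = f^[t] '' (A.1 : Set X) := by
  induction t with
  | zero => simp
  | succ t ih =>
    rw [Function.iterate_succ_apply', Function.iterate_succ', Set.image_comp, ← ih]
    rfl

def SymProd.ofFinset (F : Finset X) (hne : F.Nonempty) (hcard : F.card ≤ k) : SymProd X k :=
  ⟨⟨⟨F, F.finite_toSet.isCompact⟩, Finset.coe_nonempty.mpr hne⟩, F.finite_toSet,
    (Set.ncard_coe_finset F).trans_le hcard⟩

@[simp]
theorem SymProd.coe_ofFinset (F : Finset X) (hne : F.Nonempty) (hcard : F.card ≤ k) :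
    ((SymProd.ofFinset F hne hcard).1 : Set X) = F :=
  rfl

variable {f : X → X} {hf : Continuous f} {n : ℕ} {δ ε : ℝ}

theorem dynDist_inducedSym_le_of_image_eq {c : X → X} (hδ : 0 ≤ δ)
    (hc : ∀ x, dynDist f n x (c x) ≤ δ) {A B : SymProd X k}
    (hAB : c '' (A.1 : Set X) = c '' (B.1 : Set X)) :
    dynDist (inducedSym f hf k) n A B ≤ 2 * δ := by
  rw [dynDist_le_iff (by positivity)]
  intro t ht
  have hclose : ∀ x, dist (f^[t] x) (f^[t] (c x)) ≤ δ := fun x => (dynDist_le_iff hδ).mp (hc x) t ht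
  have hcover : ∀ {S T : Set X}, c '' S = c '' T →
      ∀ x ∈ f^[t] '' S, ∃ y ∈ f^[t] '' T, dist x y ≤ 2 * δ := by
    rintro S T hST _ ⟨a, ha, rfl⟩
    obtain ⟨b, hb, hcb⟩ := hST ▸ Set.mem_image_of_mem c ha
    refine ⟨f^[t] b, Set.mem_image_of_mem _ hb, ?_⟩
    calc dist (f^[t] a) (f^[t] b)
        ≤ dist (f^[t] a) (f^[t] (c a)) + dist (f^[t] b) (f^[t] (c b)) := by
          rw [hcb]; exact dist_triangle_right _ _ _
      _ ≤ 2 * δ := by linarith [hclose a, hclose b]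
  rw [SymProd.dist_eq, inducedSym_iterate_coe, inducedSym_iterate_coe]
  exact Metric.hausdorffDist_le_of_mem_dist (by positivity) (hcover hAB) (hcover hAB.symm)

/-- Sending each point of a configuration to a nearby point of the spanning set `D` is injective on
a separated family, and takes values in the subsets of `D` with at most `k` elements. -/
theorem card_le_of_isDynSeparated_inducedSym {D : Finset X} (hδ : 0 ≤ δ)
    (hD : ∀ x, ∃ y ∈ D, dynDist f n x y ≤ δ) (hεδ : 2 * δ < ε) {E : Finset (SymProd X k)}
    (hE : IsDynSeparated (inducedSym f hf k) n ε E) : E.card ≤ (k + 1) * (D.card + 1) ^ k := by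
  classical
  choose c hcD hc using hD
  set shadow : SymProd X k → Finset X := fun A => A.2.1.toFinset.image c
  have hmaps : Set.MapsTo shadow E
      ((Finset.range (k + 1)).biUnion fun j => D.powersetCard j :) := by
    intro A _
    simp only [Finset.coe_biUnion, Finset.coe_range, Set.mem_Iio, Set.mem_iUnion,
      Finset.mem_coe, Finset.mem_powersetCard]
    refine ⟨_, Nat.lt_succ_of_le ?_, Finset.image_subset_iff.mpr fun x _ => hcD x, rfl⟩
    exact Finset.card_image_le.trans (Set.ncard_eq_toFinset_card _ A.2.1 ▸ A.2.2)
  have hinj : Set.InjOn shadow E := by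
    intro A hA B hB hAB
    by_contra hne
    have hcAB : c '' (A.1 : Set X) = c '' (B.1 : Set X) := by
      simpa [shadow] using congrArg (fun F : Finset X => (F : Set X)) hAB
    exact (hE A hA B hB hne).not_gt
      ((dynDist_inducedSym_le_of_image_eq hδ hc hcAB).trans_lt hεδ)
  calc E.card ≤ _ := Finset.card_le_card_of_injOn shadow hmaps hinj
    _ ≤ ∑ j ∈ Finset.range (k + 1), (D.powersetCard j).card := Finset.card_biUnion_le
    _ ≤ ∑ _j ∈ Finset.range (k + 1), (D.card + 1) ^ k := by
      refine Finset.sum_le_sum fun j hj => ?_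
      rw [Finset.card_powersetCard]
      calc D.card.choose j ≤ D.card ^ j := Nat.choose_le_pow _ _
        _ ≤ (D.card + 1) ^ j := Nat.pow_le_pow_left (Nat.le_succ _) _
        _ ≤ (D.card + 1) ^ k :=
          Nat.pow_le_pow_right (Nat.succ_pos _) (Nat.lt_succ_iff.mp (Finset.mem_range.mp hj))
    _ = (k + 1) * (D.card + 1) ^ k := by simp

theorem card_le_of_isDynSeparated_inducedSym_unitInterval {f : unitInterval → unitInterval}
    (hmono : ∀ t, Monotone f^[t] ∨ Antitone f^[t]) (hf : Continuous f) (hn : 1 ≤ n)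
    (hε : 0 < ε) {E : Finset (SymProd unitInterval k)}
    (hE : IsDynSeparated (inducedSym f hf k) n ε E) :
    E.card ≤ (k + 1) * (⌊3 / ε⌋₊ + 3) ^ k * n ^ k := by
  obtain ⟨D, hDcard, hD⟩ := exists_finset_forall_exists_dynDist_lt (by positivity : 0 < ε / 3)
    fun F hF => card_le_of_isDynSeparated_unitInterval hmono (by positivity) hF
  rw [one_div_div] at hDcard
  calc E.card ≤ (k + 1) * (D.card + 1) ^ k :=
        card_le_of_isDynSeparated_inducedSym (by positivity)
          (fun x => (hD x).imp fun _ ⟨hy, h⟩ => ⟨hy, h.le⟩) (by linarith) hE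
    _ ≤ (k + 1) * ((⌊3 / ε⌋₊ + 3) * n) ^ k := by gcongr; nlinarith
    _ = (k + 1) * (⌊3 / ε⌋₊ + 3) ^ k * n ^ k := by rw [mul_pow, mul_assoc]

end SymProd

section LowerBound

theorem iterate_mul_apply_of_iterate_apply {X : Type*} {f : X → X} {p : ℕ} {z : ℤ → X}
    (hz : ∀ j, f^[p] (z j) = z (j + 1)) (t : ℕ) (j : ℤ) : f^[p * t] (z j) = z (j + t) := by
  induction t generalizing j with
  | zero => simp
  | succ t ih =>
    rw [mul_add_one, Function.iterate_add_apply, hz, ih]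
    push_cast
    ring_nf

variable {X : Type*} [MetricSpace X] {ε : ℝ}

theorem le_hausdorffDist_of_mem {s t : Set X} {x : X} (hx : x ∈ s) (ht : t.Nonempty)
    (hs : Bornology.IsBounded s) (ht' : Bornology.IsBounded t) (h : ∀ y ∈ t, ε ≤ dist x y) :
    ε ≤ Metric.hausdorffDist s t :=
  ((Metric.le_infDist ht).mpr h).trans <| Metric.infDist_le_hausdorffDist_of_mem hx <|
    Metric.hausdorffEDist_ne_top_of_nonempty_of_bounded ⟨x, hx⟩ ht hs ht'

theorem Nat.mul_lt_of_lt_div {t n p : ℕ} (h : t < n / p) : p * t < n := by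
  have hp : 0 < p := Nat.pos_of_ne_zero (by rintro rfl; simp at h)
  calc p * t < p * (t + 1) := Nat.mul_lt_mul_of_pos_left (Nat.lt_succ_self t) hp
    _ ≤ p * (n / p) := Nat.mul_le_mul_left p h
    _ ≤ n := Nat.mul_div_le n p

variable {f : X → X} {p k : ℕ} {z : ℤ → X}

/-- At time `p t` the configuration `{z (-s) : s ∈ T}` contains `z 0`, while `{z (-s) : s ∈ S}`
only contains points `z i` with `i ≠ 0`. -/
theorem le_dynDist_inducedSym_of_mem_of_notMem (hf : Continuous f) (hε : 0 < ε)
    (hz : ∀ j, f^[p] (z j) = z (j + 1)) (hsep : ∀ i ≠ 0, ε ≤ dist (z 0) (z i)) {n : ℕ}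
    {T S : Finset ℕ} {A B : SymProd X k} (hA : (A.1 : Set X) = (fun s : ℕ => z (-s)) '' T)
    (hB : (B.1 : Set X) = (fun s : ℕ => z (-s)) '' S) (hS : S.Nonempty) {t : ℕ}
    (htT : t ∈ T) (htS : t ∉ S) (htn : p * t < n) :
    ε ≤ dynDist (inducedSym f hf k) n A B := by
  have himage : ∀ U : Finset ℕ,
      f^[p * t] '' ((fun s : ℕ => z (-s)) '' U) = (fun s : ℕ => z (t - s)) '' U := by
    intro U
    simp only [Set.image_image, iterate_mul_apply_of_iterate_apply hz, neg_add_eq_sub]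
  refine (le_dynDist_iff hε).mpr ⟨p * t, htn, ?_⟩
  rw [SymProd.dist_eq, inducedSym_iterate_coe, inducedSym_iterate_coe, hA, hB, himage, himage]
  refine le_hausdorffDist_of_mem (x := z 0) ⟨t, htT, by simp⟩
    ((Finset.coe_nonempty.mpr hS).image _) (T.finite_toSet.image _).isBounded
    (S.finite_toSet.image _).isBounded ?_
  rintro _ ⟨s, hs, rfl⟩
  exact hsep _ (sub_ne_zero.mpr (Nat.cast_injective.ne (ne_of_mem_of_not_mem hs htS).symm))

theorem exists_isDynSeparated_inducedSym_card_eq_choose (hf : Continuous f) (hε : 0 < ε)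
    (hz : ∀ j, f^[p] (z j) = z (j + 1)) (hsep : ∀ i ≠ 0, ε ≤ dist (z 0) (z i)) (hk : 1 ≤ k)
    (n : ℕ) : ∃ E : Finset (SymProd X k),
      E.card = (n / p).choose k ∧ IsDynSeparated (inducedSym f hf k) n ε E := by
  classical
  set family := (Finset.range (n / p)).powersetCard k
  have hcard : ∀ T : family, T.1.card = k := fun T => (Finset.mem_powersetCard.mp T.2).2
  have hne : ∀ T : family, T.1.Nonempty := fun T => Finset.card_pos.mp (hcard T ▸ hk)
  let A : family → SymProd X k := fun T => SymProd.ofFinset (T.1.image fun s : ℕ => z (-s))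
    ((hne T).image _) (Finset.card_image_le.trans (hcard T).le)
  have hA : ∀ T S : family, ∀ t ∈ T.1, t ∉ S.1 →
      ε ≤ dynDist (inducedSym f hf k) n (A T) (A S) := fun T S t htT htS =>
    le_dynDist_inducedSym_of_mem_of_notMem hf hε hz hsep (by simp [A]) (by simp [A]) (hne S) htT htS
      (Nat.mul_lt_of_lt_div (Finset.mem_range.mp ((Finset.mem_powersetCard.mp T.2).1 htT)))
  have hdiff : ∀ T S : family, T ≠ S → ∃ t ∈ T.1, t ∉ S.1 := by
    intro T S hTS
    by_contra! hsub
    exact hTS <| Subtype.ext <|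
      Finset.eq_of_subset_of_card_le hsub (by rw [hcard T, hcard S])
  have hinj : Function.Injective A := by
    intro T S hAT
    by_contra hTS
    obtain ⟨t, htT, htS⟩ := hdiff T S hTS
    have := hA T S t htT htS
    rw [hAT, dynDist_self] at this
    exact hε.not_ge this
  refine ⟨Finset.univ.image A, ?_, ?_⟩
  · rw [Finset.card_image_of_injective _ hinj, Finset.card_univ, Fintype.card_coe,
      Finset.card_powersetCard, Finset.card_range]
  · simp only [IsDynSeparated, Finset.mem_image, Finset.mem_univ, true_and]
    rintro _ ⟨T, rfl⟩ _ ⟨S, rfl⟩ hTS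
    obtain ⟨t, htT, htS⟩ := hdiff T S (fun h => hTS (h ▸ rfl))
    exact hA T S t htT htS

end LowerBound

section Orbit

theorem strictMono_of_apply_succ {α : Type*} [LinearOrder α] {ψ : α → α} (hψ : StrictMono ψ)
    {z : ℤ → α} (hz : ∀ j, z (j + 1) = ψ (z j)) (h01 : z 0 < z 1) : StrictMono z := by
  refine strictMono_int_of_lt_succ fun j => ?_
  induction j using Int.induction_on with
  | zero => simpa using h01
  | succ i ih =>
    have := hψ ih
    rwa [← hz, ← hz] at this
  | pred i ih =>
    rw [sub_add_cancel, ← hψ.lt_iff_lt, ← hz, ← hz, sub_add_cancel]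
    exact ih

theorem strictMono_or_strictAnti_of_apply_succ {α : Type*} [LinearOrder α] {ψ : α → α}
    (hψ : StrictMono ψ) {z : ℤ → α} (hz : ∀ j, z (j + 1) = ψ (z j)) (h01 : z 0 ≠ z 1) :
    StrictMono z ∨ StrictAnti z := by
  rcases h01.lt_or_gt with h | h
  · exact Or.inl (strictMono_of_apply_succ hψ hz h)
  · refine Or.inr (strictMono_toDual_comp_iff.mp ?_)
    exact strictMono_of_apply_succ (ψ := OrderDual.toDual ∘ ψ ∘ OrderDual.ofDual) hψ.dual
      (fun j => congrArg OrderDual.toDual (hz j)) h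

theorem exists_pos_forall_ne_zero_le_dist {z : ℤ → unitInterval}
    (hz : StrictMono z ∨ StrictAnti z) : ∃ ε > 0, ∀ i ≠ 0, ε ≤ dist (z 0) (z i) := by
  have hinj : Function.Injective z := hz.elim StrictMono.injective StrictAnti.injective
  have hmono : Monotone z ∨ Antitone z := hz.imp StrictMono.monotone StrictAnti.antitone
  refine ⟨min (dist (z 0) (z 1)) (dist (z 0) (z (-1))),
    lt_min (dist_pos.mpr (hinj.ne (by norm_num))) (dist_pos.mpr (hinj.ne (by norm_num))),
    fun i hi => ?_⟩
  rw [Subtype.dist_eq, Subtype.dist_eq, Subtype.dist_eq]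
  rcases hi.lt_or_gt with hi | hi
  · refine (min_le_right _ _).trans ?_
    rw [dist_comm, dist_comm (z 0 : ℝ)]
    exact Real.dist_right_le_of_mem_uIcc (mem_uIcc_of_le_of_le hmono (by omega) (by omega))
  · exact (min_le_left _ _).trans
      (Real.dist_left_le_of_mem_uIcc (mem_uIcc_of_le_of_le hmono (by omega) (by omega)))

theorem nonWandering_eq_univ_of_iterate_eq_id {X : Type*} [TopologicalSpace X] {f : X → X}
    {q : ℕ} (hq : 1 ≤ q) (h : f^[q] = id) : nonWandering f = Set.univ :=
  Set.eq_univ_of_forall fun x _ hU =>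
    ⟨q, hq, x, ⟨x, mem_of_mem_nhds hU, congrFun h x⟩, mem_of_mem_nhds hU⟩

theorem exists_strictMono_or_strictAnti_orbit (f : unitInterval ≃ₜ unitInterval)
    (hNW : (nonWandering f).Finite) :
    ∃ z : ℤ → unitInterval, (∀ j, f^[2] (z j) = z (j + 1)) ∧ (StrictMono z ∨ StrictAnti z) := by
  have hψ : StrictMono (⇑f)^[2] := by
    rcases f.continuous.strictMono_of_inj_boundedOrder' f.injective with h | h
    exacts [h.iterate 2, h.comp h]
  obtain ⟨c, hc⟩ : ∃ c, (⇑f)^[2] c ≠ c := by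
    by_contra! h
    rw [nonWandering_eq_univ_of_iterate_eq_id one_le_two (funext h)] at hNW
    have : Infinite unitInterval := Set.infinite_coe_iff.mpr (Set.Icc_infinite zero_lt_one)
    exact Set.infinite_univ hNW
  set z : ℤ → unitInterval := fun j => ((f * f) ^ j) c
  have hz : ∀ j, z (j + 1) = (⇑f)^[2] (z j) := fun j => by
    simp only [z, add_comm j, zpow_one_add, Homeomorph.mul_apply]
    rfl
  exact ⟨z, fun j => (hz j).symm,
    strictMono_or_strictAnti_of_apply_succ hψ hz (by simpa [z] using hc.symm)⟩

end Orbit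

section Asymptotics

open Real

theorem log_div_log_le_add {s C x : ℝ} {k : ℕ} (hx : 1 < x) (hC : 1 ≤ C) (hs : 0 ≤ s)
    (h : s ≤ C * x ^ k) : log s / log x ≤ k + log C / log x := by
  have hlx : 0 < log x := log_pos hx
  rcases hs.eq_or_lt with rfl | hs
  · have := log_nonneg hC
    rw [log_zero, zero_div]
    positivity
  have : log s ≤ log C + k * log x := by
    rw [← log_pow, ← log_mul (by positivity) (by positivity)]
    exact log_le_log hs h
  rw [div_le_iff₀ hlx, add_mul, div_mul_cancel₀ _ hlx.ne']
  linarith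

theorem sub_le_log_div_log {s C x : ℝ} {k : ℕ} (hx : 1 < x) (hC : 0 < C)
    (h : x ^ k ≤ C * s) : k - log C / log x ≤ log s / log x := by
  have hlx : 0 < log x := log_pos hx
  have hs : 0 < s := pos_of_mul_pos_right ((pow_pos (by linarith) k).trans_le h) hC.le
  have : k * log x ≤ log C + log s := by
    rw [← log_pow, ← log_mul hC.ne' hs.ne']
    exact log_le_log (by positivity) h
  rw [le_div_iff₀ hlx, sub_mul, div_mul_cancel₀ _ hlx.ne']
  linarith

theorem tendsto_ofReal_add_div_log (a c : ℝ) :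
    Tendsto (fun n : ℕ => ENNReal.ofReal (a + c / log n)) atTop (𝓝 (ENNReal.ofReal a)) := by
  refine (ENNReal.continuous_ofReal.tendsto a).comp ?_
  simpa using tendsto_const_nhds.add
    (tendsto_const_nhds.div_atTop (tendsto_log_atTop.comp tendsto_natCast_atTop_atTop))

variable {S : ℕ → ℕ} {C k : ℕ}

theorem limsup_ofReal_log_div_log_le (hC : 0 < C) (h : ∀ᶠ n in atTop, S n ≤ C * n ^ k) :
    limsup (fun n : ℕ => ENNReal.ofReal (log (S n) / log n)) atTop ≤ k := by
  rw [← ENNReal.ofReal_natCast, ← (tendsto_ofReal_add_div_log k (log C)).limsup_eq]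
  refine limsup_le_limsup ?_
  filter_upwards [h, eventually_gt_atTop 1] with n hn hn1
  exact ENNReal.ofReal_le_ofReal <| log_div_log_le_add (by exact_mod_cast hn1)
    (by exact_mod_cast hC) (by positivity) (by exact_mod_cast hn)

theorem le_limsup_ofReal_log_div_log (hC : 0 < C) (h : ∀ᶠ n in atTop, n ^ k ≤ C * S n) :
    k ≤ limsup (fun n : ℕ => ENNReal.ofReal (log (S n) / log n)) atTop := by
  rw [← ENNReal.ofReal_natCast, ← (tendsto_ofReal_add_div_log k (-log C)).limsup_eq]
  refine limsup_le_limsup ?_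
  filter_upwards [h, eventually_gt_atTop 1] with n hn hn1
  refine ENNReal.ofReal_le_ofReal ?_
  rw [neg_div, ← sub_eq_add_neg]
  exact sub_le_log_div_log (by exact_mod_cast hn1) (by exact_mod_cast hC) (by exact_mod_cast hn)

theorem pow_le_mul_choose_div {p n : ℕ} (hp : 0 < p) (hn : 2 * p * k ≤ n) :
    n ^ k ≤ (2 * p) ^ k * k.factorial * (n / p).choose k := by
  set m := n / p
  have hkm : 2 * k ≤ m := (Nat.le_div_iff_mul_le hp).mpr (by linarith)
  have hnm : n ≤ 2 * p * (m + 1 - k) :=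
    calc n ≤ p * (m + 1) := (Nat.lt_mul_div_succ n hp).le
      _ ≤ p * (2 * (m + 1 - k)) := Nat.mul_le_mul_left p (by omega)
      _ = 2 * p * (m + 1 - k) := by ring
  calc n ^ k ≤ (2 * p * (m + 1 - k)) ^ k := Nat.pow_le_pow_left hnm k
    _ = (2 * p) ^ k * (m + 1 - k) ^ k := mul_pow _ _ _
    _ ≤ (2 * p) ^ k * m.descFactorial k := by gcongr; exact Nat.pow_sub_le_descFactorial m k
    _ = (2 * p) ^ k * k.factorial * m.choose k := by
      rw [Nat.descFactorial_eq_factorial_mul_choose, mul_assoc]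

end Asymptotics

theorem stmt1 (f : ↥unitInterval ≃ₜ ↥unitInterval) (hNW : (nonWandering ⇑f).Finite)
    (k : ℕ) (hk : 1 ≤ k) :
    polEnt (inducedSym ⇑f f.continuous k) Set.univ = (k : ℝ≥0∞) := by
  have hmono : ∀ t, Monotone (⇑f)^[t] ∨ Antitone (⇑f)^[t] := monotone_or_antitone_iterate <|
    (f.continuous.strictMono_of_inj_boundedOrder' f.injective).imp
      StrictMono.monotone StrictAnti.antitone
  have hbound : ∀ ε > 0, ∀ n ≥ 1, ∀ E : Finset (SymProd unitInterval k),
      IsDynSeparated (inducedSym f f.continuous k) n ε E →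
        E.card ≤ (k + 1) * (⌊3 / ε⌋₊ + 3) ^ k * n ^ k := fun ε hε n hn E hE =>
    card_le_of_isDynSeparated_inducedSym_unitInterval hmono f.continuous hn hε hE
  obtain ⟨z, hz, hzmono⟩ := exists_strictMono_or_strictAnti_orbit f hNW
  obtain ⟨ε₀, hε₀, hsep⟩ := exists_pos_forall_ne_zero_le_dist hzmono
  refine le_antisymm (iSup₂_le fun ε hε => ?_) (le_iSup₂_of_le ε₀ hε₀ ?_)
  · exact limsup_ofReal_log_div_log_le (by positivity)
      (eventually_atTop.mpr ⟨1, fun n hn => maxSep_le fun E _ => hbound ε hε n hn E⟩)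
  · refine le_limsup_ofReal_log_div_log (C := (2 * 2) ^ k * k.factorial) (by positivity) ?_
    filter_upwards [eventually_ge_atTop (2 * 2 * k), eventually_ge_atTop 1] with n hn hn1
    obtain ⟨E, hEcard, hE⟩ :=
      exists_isDynSeparated_inducedSym_card_eq_choose f.continuous hε₀ hz hsep hk n
    calc n ^ k ≤ (2 * 2) ^ k * k.factorial * (n / 2).choose k := pow_le_mul_choose_div two_pos hn
      _ ≤ _ := by
        gcongr
        exact hEcard ▸ card_le_maxSep (fun E _ => hbound ε₀ hε₀ n hn1 E) (Set.subset_univ _) hE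
end

section
/- Let f be a continuous self-map of a compact metric space X with finitely many non-wandering points, and let Y ⊆ X be an f-invariant set. Then for any finite set S = {x_1,…,x_l} ⊆ X \ NW(f), the local polynomial entropy of S on Y satisfies h_pol^{loc}(S;Y) ≤ l. -/
open Filter Topology TopologicalSpace Set
open scoped ENNReal

/-
Each `x_j` is wandering, so it has a neighbourhood `V_j` with `f^n(V_j) ∩ V_j = ∅` for all
`n ≥ 1`, and once `n` is large every `U_{j,n}` lies inside `V_j`. Then an orbit meets each
`U_{j,n}` at most once, so a coding of length `m` is determined by the (at most one) position
of each of the `l` letters `U_{j,n}`. Hence `#A_m ≤ (m + 1)^l`, and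
`l log (m + 1) / log m → l`.
-/

def IsWanderingSet {X : Type*} (f : X → X) (V : Set X) : Prop :=
  ∀ n, 1 ≤ n → MapsTo f^[n] V Vᶜ

namespace IsWanderingSet

variable {X : Type*} {f : X → X} {V : Set X}

theorem mono {W : Set X} (hV : IsWanderingSet f V) (hWV : W ⊆ V) : IsWanderingSet f W :=
  fun n hn _ hy hfy => hV n hn (hWV hy) (hWV hfy)

theorem eq_of_iterate_mem (hV : IsWanderingSet f V) {y : X} {s t : ℕ}
    (hs : f^[s] y ∈ V) (ht : f^[t] y ∈ V) : s = t := by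
  wlog hst : s ≤ t generalizing s t
  · exact (this ht hs (by omega)).symm
  by_contra hne
  have hft : f^[t] y = f^[t - s] (f^[s] y) := by
    rw [← Function.iterate_add_apply, Nat.sub_add_cancel hst]
  exact hV (t - s) (by omega) hs (hft ▸ ht)

end IsWanderingSet

theorem exists_isWanderingSet_mem_nhds {X : Type*} [TopologicalSpace X] {f : X → X} {p : X}
    (hp : p ∉ nonWandering f) : ∃ V ∈ 𝓝 p, IsWanderingSet f V := by
  simp only [nonWandering, mem_ofPred_eq, not_forall] at hp
  obtain ⟨V, hV, hwander⟩ := hp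
  exact ⟨V, hV, fun n hn y hy hfy => hwander ⟨n, hn, f^[n] y, mem_image_of_mem _ hy, hfy⟩⟩

theorem ncard_le_of_subsingleton_preimage_some {ι α : Type*} [Fintype ι] [Fintype α]
    (W : Set (ι → Option α)) (hW : ∀ w ∈ W, ∀ a, (w ⁻¹' {some a}).Subsingleton) :
    W.ncard ≤ (Fintype.card ι + 1) ^ Fintype.card α := by
  classical
  let position (w : ι → Option α) (a : α) : Option ι :=
    if h : ∃ t, w t = some a then some h.choose else none
  have position_eq_some_iff : ∀ w ∈ W, ∀ a t, position w a = some t ↔ w t = some a := by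
    intro w hw a t
    by_cases h : ∃ t, w t = some a
    · simp only [position, dif_pos h, Option.some.injEq]
      exact ⟨fun ht => ht ▸ h.choose_spec, fun ht => hW w hw a h.choose_spec ht⟩
    · simp only [position, dif_neg h, reduceCtorEq, false_iff]
      exact fun ht => h ⟨t, ht⟩
  have hinj : InjOn position W := by
    intro w hw w' hw' hpos
    funext t
    refine Option.ext fun a => ?_
    rw [← position_eq_some_iff w hw, ← position_eq_some_iff w' hw', hpos]
  calc W.ncard ≤ (univ : Set (α → Option ι)).ncard :=
        ncard_le_ncard_of_injOn position (fun _ _ => mem_univ _) hinj finite_univ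
    _ = (Fintype.card ι + 1) ^ Fintype.card α := by
        rw [ncard_univ, Nat.card_eq_fintype_card, Fintype.card_fun, Fintype.card_option]

theorem ncard_codings_le_of_isWanderingSet {X : Type*} {f : X → X} {L : ℕ} {F : Fin L → Set X}
    (hF : ∀ i, IsWanderingSet f (F i)) (Y : Set X) (n : ℕ) :
    (codings f F Y n).ncard ≤ (n + 1) ^ L := by
  simpa using ncard_le_of_subsingleton_preimage_some (codings f F Y n) <| by
    rintro w ⟨y, -, hw⟩ i s (hs : w s = some i) t (ht : w t = some i)
    have hys : f^[s] y ∈ F i := by simpa [hs] using hw s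
    have hyt : f^[t] y ∈ F i := by simpa [ht] using hw t
    exact Fin.ext ((hF i).eq_of_iterate_mem hys hyt)

theorem tendsto_log_nat_add_one_div_log :
    Tendsto (fun n : ℕ => Real.log (n + 1) / Real.log n) atTop (𝓝 1) := by
  have hlog : Tendsto (fun n : ℕ => Real.log n) atTop atTop :=
    Real.tendsto_log_atTop.comp tendsto_natCast_atTop_atTop
  have hdiff := (Real.tendsto_log_nat_add_one_sub_log.div_atTop hlog).const_add 1
  rw [add_zero] at hdiff
  refine hdiff.congr' ?_
  filter_upwards [hlog.eventually_gt_atTop 0] with n hn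
  field_simp
  ring

theorem limsup_ofReal_log_div_log_le_s11 {a : ℕ → ℕ} {L : ℕ} (ha : ∀ n, a n ≤ (n + 1) ^ L) :
    atTop.limsup (fun n : ℕ => ENNReal.ofReal (Real.log (a n) / Real.log n)) ≤ L := by
  have hbound : ∀ n, Real.log (a n) ≤ L * Real.log (n + 1) := by
    intro n
    rcases Nat.eq_zero_or_pos (a n) with h0 | hpos
    · rw [h0, Nat.cast_zero, Real.log_zero]
      exact mul_nonneg (Nat.cast_nonneg L) (Real.log_nonneg (by simp))
    · rw [← Real.log_pow]
      exact Real.log_le_log (by exact_mod_cast hpos) (by exact_mod_cast ha n)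
  have hlim : Tendsto (fun n : ℕ => ENNReal.ofReal (L * (Real.log (n + 1) / Real.log n)))
      atTop (𝓝 L) := by
    simpa only [mul_one, ENNReal.ofReal_natCast, Function.comp_def] using
      (ENNReal.continuous_ofReal.tendsto _).comp
        (tendsto_log_nat_add_one_div_log.const_mul (L : ℝ))
  rw [← hlim.limsup_eq]
  refine limsup_le_limsup (Eventually.of_forall fun n => ENNReal.ofReal_le_ofReal ?_)
  rw [← mul_div_assoc]
  exact div_le_div_of_nonneg_right (hbound n) (Real.log_natCast_nonneg n)

theorem polEntRel_le_of_isWanderingSet {X : Type*} {f : X → X} {L : ℕ} {F : Fin L → Set X}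
    (hF : ∀ i, IsWanderingSet f (F i)) (Y : Set X) : polEntRel f F Y ≤ L :=
  limsup_ofReal_log_div_log_le_s11 (ncard_codings_le_of_isWanderingSet hF Y)

theorem stmt11_general {X : Type*} [MetricSpace X] (f : X → X) (Y : Set X) (l : ℕ) (x : Fin l → X)
    (hx : ∀ j, x j ∉ nonWandering f)
    (U : Fin l → ℕ → Set X)
    (hUanti : ∀ j, Antitone (U j))
    (hUbasis : ∀ j, ∀ V ∈ nhds (x j), ∃ n, U j n ⊆ V) :
    Filter.atTop.limsup (fun n => polEntRel f (fun j => U j n) Y) ≤ (l : ℝ≥0∞) := by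
  choose V hV hVwander using fun j => exists_isWanderingSet_mem_nhds (hx j)
  choose N hN using fun j => hUbasis j (V j) (hV j)
  refine limsup_le_of_le (by isBoundedDefault) ?_
  filter_upwards [eventually_ge_atTop (Finset.univ.sup N)] with n hn
  refine polEntRel_le_of_isWanderingSet (fun j => (hVwander j).mono ?_) Y
  exact (hUanti j ((Finset.le_sup (Finset.mem_univ j)).trans hn)).trans (hN j)

theorem stmt11 {X : Type*} [MetricSpace X] [CompactSpace X] (f : X → X) (hf : Continuous f)
    (hNW : (nonWandering f).Finite) (Y : Set X) (hY : Set.MapsTo f Y Y)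
    (l : ℕ) (x : Fin l → X) (hinj : Function.Injective x)
    (hx : ∀ j, x j ∉ nonWandering f)
    (U : Fin l → ℕ → Set X)
    (hUnhds : ∀ j n, U j n ∈ nhds (x j))
    (hUanti : ∀ j, Antitone (U j))
    (hUbasis : ∀ j, ∀ V ∈ nhds (x j), ∃ n, U j n ⊆ V) :
    Filter.atTop.limsup (fun n => polEntRel f (fun j => U j n) Y) ≤ (l : ℝ≥0∞) :=
  stmt11_general f Y l x hx U hUanti hUbasis
end
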